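/- Let γ be an admissible weight. Then for every η ∈ (0,1) there exist δ > 0 and C > 0 such that E(δt)·E(ηt) ≤ C·E(t) for all t > 0. -/

import Mathlib

open Filter MeasureTheory

/-- An *admissible weight*: a function `γ`, holomorphic and non-vanishing on the sector
`S = {s : |arg (s + c)| < α₀}` (with `c > 0`, `α₀ > π/2`) and positive on `(−c, ∞)`,
together with a holomorphic branch `G` of `log γ` on `S` that is real on `(−c, ∞)`;
`L s = exp (G s / s)` and `ε s = s·L'(s)/L(s)`, where `ε` is positive and bounded on
`(0,∞)` and satisfies conditions (A)–(D) of the paper. -/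
structure AdmissibleWeight where
  /-- shift of the sector -/
  c : ℝ
  /-- half-opening of the sector -/
  α₀ : ℝ
  hc : 0 < c
  hα₀ : Real.pi / 2 < α₀
  /-- the weight function -/
  γ : ℂ → ℂ
  /-- a holomorphic branch of `log γ` -/
  G : ℂ → ℂ
  hγ_diff : DifferentiableOn ℂ γ {s : ℂ | |Complex.arg (s + (c : ℂ))| < α₀}
  hγ_ne : ∀ s ∈ {s : ℂ | |Complex.arg (s + (c : ℂ))| < α₀}, γ s ≠ 0
  hγ_pos : ∀ x : ℝ, -c < x → 0 < (γ (x : ℂ)).re ∧ (γ (x : ℂ)).im = 0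
  hG_diff : DifferentiableOn ℂ G {s : ℂ | |Complex.arg (s + (c : ℂ))| < α₀}
  hG_exp : ∀ s ∈ {s : ℂ | |Complex.arg (s + (c : ℂ))| < α₀}, Complex.exp (G s) = γ s
  hG_real : ∀ x : ℝ, -c < x → (G (x : ℂ)).im = 0
  /-- `L s = γ(s)^{1/s} = exp (G s / s)` -/
  L : ℂ → ℂ
  hL : ∀ s : ℂ, L s = Complex.exp (G s / s)
  /-- `ε s = s · L'(s) / L(s)` -/
  eps : ℂ → ℂ
  heps : ∀ s : ℂ, eps s = s * deriv L s / L s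
  /-- the restriction of `ε` to the positive reals -/
  epsR : ℝ → ℝ
  hepsR : ∀ ρ : ℝ, epsR ρ = (eps (ρ : ℂ)).re
  heps_real : ∀ ρ : ℝ, 0 < ρ → (eps (ρ : ℂ)).im = 0
  heps_pos : ∀ ρ : ℝ, 0 < ρ → 0 < epsR ρ
  heps_bdd : ∃ B : ℝ, ∀ ρ : ℝ, 0 < ρ → epsR ρ ≤ B
  /-- (A): `∫^∞ ε(ρ)/ρ dρ = ∞` -/
  hA : ¬ MeasureTheory.IntegrableOn (fun ρ : ℝ => epsR ρ / ρ) (Set.Ici 1)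
  /-- (B): `ε(λρ) ∼ ε(ρ)` as `ρ → ∞`, locally uniformly for `λ` in the sector -/
  hB : ∀ K : Set ℂ, IsCompact K → K ⊆ {l : ℂ | |Complex.arg l| < α₀} →
    TendstoUniformlyOn (fun (ρ : ℝ) (l : ℂ) => eps (l * (ρ : ℂ)) / eps (ρ : ℂ))
      (fun _ => 1) Filter.atTop K
  /-- the limit of `ε` at infinity -/
  limε : ℝ
  /-- (C): `lim ε` exists and is smaller than `2` -/
  hlim : Filter.Tendsto epsR Filter.atTop (nhds limε)
  hlim2 : limε < 2
  /-- (D): if `lim ε = 0`, `ε` is eventually decreasing and `|ε'(ρ)| ≳_δ e^{−δρ}` -/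
  hD : limε = 0 →
    (∃ ρ₀ : ℝ, AntitoneOn epsR (Set.Ici ρ₀)) ∧
    (∀ δ : ℝ, 0 < δ → ∃ cδ : ℝ, 0 < cδ ∧
      ∀ᶠ ρ in Filter.atTop, cδ * Real.exp (-δ * ρ) ≤ |deriv epsR ρ|)

/-- The entire function `E(z) = ∑_{n≥0} zⁿ/γ(n+1)` associated with an admissible weight,
restricted to the reals (for positive integers, `γ` is real and positive). -/
noncomputable def AdmissibleWeight.E (w : AdmissibleWeight) (x : ℝ) : ℝ :=
  ∑' n : ℕ, x ^ n / (w.γ ((n + 1 : ℕ) : ℂ)).re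

namespace AdmissibleWeight

variable (w : AdmissibleWeight)

/-- The real branch of `log γ` on the real axis. -/
noncomputable def gg : ℝ → ℝ := fun x => (w.G x).re

/-- `ff x = log L x = (log γ x)/x` on the positive reals. -/
noncomputable def ff : ℝ → ℝ := fun x => w.gg x / x

/-- `bb n = log γ(n+1)`. -/
noncomputable def bb (n : ℕ) : ℝ := w.gg ((n : ℝ) + 1)

/-- `aa n = γ(n+1)` (the coefficient denominators). -/
noncomputable def aa (n : ℕ) : ℝ := Real.exp (w.bb n)

/-- A positive upper bound for `ε` on the positive reals. -/
noncomputable def BB : ℝ := max w.heps_bdd.choose 1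

lemma BB_pos : 0 < w.BB := lt_of_lt_of_le one_pos (le_max_right _ _)

lemma epsR_le_BB {x : ℝ} (hx : 0 < x) : w.epsR x ≤ w.BB :=
  le_trans (w.heps_bdd.choose_spec x hx) (le_max_left _ _)

lemma mem_sector {x : ℝ} (hx : -w.c < x) :
    (x : ℂ) ∈ {s : ℂ | |Complex.arg (s + (w.c : ℂ))| < w.α₀} := by
  have h1 : (x : ℂ) + (w.c : ℂ) = ((x + w.c : ℝ) : ℂ) := by push_cast; ring
  have h2 : (0:ℝ) < x + w.c := by linarith
  simp only [Set.mem_setOf_eq, h1, Complex.arg_ofReal_of_nonneg h2.le, abs_zero]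
  linarith [Real.pi_pos, w.hα₀]

lemma sector_mem_nhds {x : ℝ} (hx : -w.c < x) :
    {s : ℂ | |Complex.arg (s + (w.c : ℂ))| < w.α₀} ∈ nhds (x : ℂ) := by
  have hV : IsOpen {s : ℂ | 0 < (s + (w.c : ℂ)).re} := by
    have : Continuous fun s : ℂ => (s + (w.c : ℂ)).re :=
      Complex.continuous_re.comp (continuous_id.add continuous_const)
    exact isOpen_lt continuous_const this
  apply Filter.mem_of_superset (hV.mem_nhds ?_)
  · intro s hs
    simp only [Set.mem_setOf_eq] at hs ⊢
    have : |Complex.arg (s + (w.c : ℂ))| < Real.pi / 2 :=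
      Complex.abs_arg_lt_pi_div_two_iff.mpr (Or.inl hs)
    linarith [w.hα₀]
  · simp only [Set.mem_setOf_eq, Complex.add_re, Complex.ofReal_re]
    simpa using by linarith

lemma G_diffAt {x : ℝ} (hx : -w.c < x) : DifferentiableAt ℂ w.G (x : ℂ) :=
  (w.hG_diff.differentiableAt (w.sector_mem_nhds hx))

lemma G_eq_gg {x : ℝ} (hx : -w.c < x) : w.G (x : ℂ) = ((w.gg x : ℝ) : ℂ) := by
  apply Complex.ext
  · simp [gg]
  · simp [w.hG_real x hx]

lemma gamma_re_eq {x : ℝ} (hx : -w.c < x) : (w.γ (x : ℂ)).re = Real.exp (w.gg x) := by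
  have h := w.hG_exp _ (w.mem_sector hx)
  rw [w.G_eq_gg hx] at h
  rw [← h, Complex.exp_ofReal_re]

lemma gg_deriv {x : ℝ} (hx : -w.c < x) :
    HasDerivAt w.gg ((deriv w.G (x : ℂ)).re) x :=
  (w.G_diffAt hx).hasDerivAt.real_of_complex

lemma epsR_eq {x : ℝ} (hx : 0 < x) :
    w.epsR x = (deriv w.G (x : ℂ)).re - w.gg x / x := by
  have hxc : -w.c < x := lt_trans (neg_lt_zero.mpr w.hc) hx
  have hx0 : (x : ℂ) ≠ 0 := by exact_mod_cast hx.ne'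
  have hG := (w.G_diffAt hxc).hasDerivAt
  have hdiv : HasDerivAt (fun s : ℂ => w.G s / s)
      ((deriv w.G (x:ℂ) * (x:ℂ) - w.G (x:ℂ) * 1) / ((x:ℂ)^2)) (x:ℂ) :=
    hG.div (hasDerivAt_id _) hx0
  have hLfun : w.L = fun s : ℂ => Complex.exp (w.G s / s) := funext w.hL
  have hL' : HasDerivAt w.L
      (Complex.exp (w.G (x:ℂ) / (x:ℂ)) *
        ((deriv w.G (x:ℂ) * (x:ℂ) - w.G (x:ℂ) * 1) / ((x:ℂ)^2))) (x:ℂ) := by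
    rw [hLfun]; exact hdiv.cexp
  have heq : w.eps (x:ℂ) = deriv w.G (x:ℂ) - w.G (x:ℂ) / (x:ℂ) := by
    rw [w.heps, hL'.deriv, w.hL]
    field_simp [Complex.exp_ne_zero]
  have hfrac : (w.G (x:ℂ)) / (x:ℂ) = ((w.gg x / x : ℝ) : ℂ) := by
    rw [w.G_eq_gg hxc]; push_cast; ring
  rw [w.hepsR, heq, hfrac, Complex.sub_re, Complex.ofReal_re]

lemma ff_deriv {x : ℝ} (hx : 0 < x) : HasDerivAt w.ff (w.epsR x / x) x := by
  have hxc : -w.c < x := lt_trans (neg_lt_zero.mpr w.hc) hx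
  have hgg := w.gg_deriv hxc
  have h := hgg.div (hasDerivAt_id x) hx.ne'
  have h2 : ((deriv w.G (x:ℂ)).re * x - w.gg x * 1) / x ^ 2 = w.epsR x / x := by
    rw [w.epsR_eq hx]; field_simp
  simp only [id_eq] at h
  rw [h2] at h
  exact h

lemma ff_mono : MonotoneOn w.ff (Set.Ioi (0:ℝ)) := by
  apply monotoneOn_of_deriv_nonneg (convex_Ioi 0)
  · exact fun x hx => (w.ff_deriv hx).continuousAt.continuousWithinAt
  · intro x hx
    rw [interior_Ioi] at hx
    exact (w.ff_deriv hx).differentiableAt.differentiableWithinAt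
  · intro x hx
    rw [interior_Ioi] at hx
    rw [(w.ff_deriv hx).deriv]
    exact div_nonneg (w.heps_pos x hx).le hx.le

lemma ff_log_bound {p q : ℝ} (hp : 0 < p) (hpq : p ≤ q) :
    w.ff q - w.ff p ≤ w.BB * (Real.log q - Real.log p) := by
  set φ : ℝ → ℝ := fun y => w.BB * Real.log y - w.ff y with hφ
  have hd : ∀ x : ℝ, 0 < x → HasDerivAt φ (w.BB * x⁻¹ - w.epsR x / x) x := by
    intro x hx
    exact ((Real.hasDerivAt_log hx.ne').const_mul w.BB).sub (w.ff_deriv hx)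
  have hmono : MonotoneOn φ (Set.Ioi (0:ℝ)) := by
    apply monotoneOn_of_deriv_nonneg (convex_Ioi 0)
    · exact fun x hx => (hd x hx).continuousAt.continuousWithinAt
    · intro x hx
      rw [interior_Ioi] at hx
      exact (hd x hx).differentiableAt.differentiableWithinAt
    · intro x hx
      rw [interior_Ioi] at hx
      rw [(hd x hx).deriv]
      have h1 : w.BB * x⁻¹ - w.epsR x / x = (w.BB - w.epsR x) / x := by
        rw [sub_div, ← div_eq_mul_inv]
      rw [h1]
      exact div_nonneg (sub_nonneg.mpr (w.epsR_le_BB hx)) hx.le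
  have := hmono (Set.mem_Ioi.mpr hp) (Set.mem_Ioi.mpr (lt_of_lt_of_le hp hpq)) hpq
  simp only [hφ] at this
  linarith

lemma ff_unbounded (R : ℝ) : ∃ x : ℝ, 1 ≤ x ∧ R < w.ff x := by
  by_contra hcon
  push_neg at hcon
  apply w.hA
  -- epsR is continuous on (0, ∞)
  have hVsub : {s : ℂ | 0 < (s + (w.c : ℂ)).re} ⊆
      {s : ℂ | |Complex.arg (s + (w.c : ℂ))| < w.α₀} := by
    intro s hs
    simp only [Set.mem_setOf_eq] at hs ⊢
    have : |Complex.arg (s + (w.c : ℂ))| < Real.pi / 2 :=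
      Complex.abs_arg_lt_pi_div_two_iff.mpr (Or.inl hs)
    linarith [w.hα₀]
  have hVopen : IsOpen {s : ℂ | 0 < (s + (w.c : ℂ)).re} :=
    isOpen_lt continuous_const (Complex.continuous_re.comp (continuous_id.add continuous_const))
  have hanal : AnalyticOnNhd ℂ w.G {s : ℂ | 0 < (s + (w.c : ℂ)).re} :=
    (w.hG_diff.mono hVsub).analyticOnNhd hVopen
  have hcontG' : ContinuousOn (deriv w.G) {s : ℂ | 0 < (s + (w.c : ℂ)).re} :=
    hanal.deriv.continuousOn
  have hmapsTo : ∀ x : ℝ, 0 < x → (x : ℂ) ∈ {s : ℂ | 0 < (s + (w.c : ℂ)).re} := by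
    intro x hx
    simp only [Set.mem_setOf_eq, Complex.add_re, Complex.ofReal_re]
    simpa using by linarith [w.hc]
  have hcont : ContinuousOn (fun ρ : ℝ => w.epsR ρ / ρ) (Set.Ioi (0:ℝ)) := by
    have h1 : ContinuousOn (fun x : ℝ => (deriv w.G (x : ℂ)).re) (Set.Ioi (0:ℝ)) := by
      apply Complex.continuous_re.comp_continuousOn
      exact hcontG'.comp Complex.continuous_ofReal.continuousOn
        (fun x hx => hmapsTo x hx)
    have h2 : ContinuousOn w.gg (Set.Ioi (0:ℝ)) := by
      intro x hx
      exact (w.gg_deriv (lt_trans (neg_lt_zero.mpr w.hc) hx)).continuousAt.continuousWithinAt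
    have h3 : ContinuousOn (fun x : ℝ => ((deriv w.G (x : ℂ)).re - w.gg x / x) / x)
        (Set.Ioi (0:ℝ)) := by
      apply ContinuousOn.div
      · exact h1.sub (h2.div continuousOn_id (fun x hx => ne_of_gt hx))
      · exact continuousOn_id
      · exact fun x hx => ne_of_gt hx
    apply h3.congr
    intro x hx
    show w.epsR x / x = _
    rw [w.epsR_eq hx]
  -- FTC bound on every interval [1, y]
  have key : ∀ nn : ℕ, (∫ x in (1:ℝ)..((nn:ℝ)+1), ‖w.epsR x / x‖) ≤ R - w.ff 1 := by
    intro nn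
    have hy : (1:ℝ) ≤ (nn:ℝ)+1 := by linarith [Nat.cast_nonneg (α := ℝ) nn]
    have huIcc : Set.uIcc (1:ℝ) ((nn:ℝ)+1) = Set.Icc 1 ((nn:ℝ)+1) := Set.uIcc_of_le hy
    have hsub : Set.Icc (1:ℝ) ((nn:ℝ)+1) ⊆ Set.Ioi (0:ℝ) := fun x hx => lt_of_lt_of_le one_pos hx.1
    have hInt : IntervalIntegrable (fun x : ℝ => w.epsR x / x) volume 1 ((nn:ℝ)+1) := by
      apply ContinuousOn.intervalIntegrable
      rw [huIcc]
      exact hcont.mono hsub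
    have hftc : (∫ x in (1:ℝ)..((nn:ℝ)+1), w.epsR x / x) = w.ff ((nn:ℝ)+1) - w.ff 1 := by
      apply intervalIntegral.integral_eq_sub_of_hasDerivAt
      · intro x hx
        rw [huIcc] at hx
        exact w.ff_deriv (hsub hx)
      · exact hInt
    have hnorm : (∫ x in (1:ℝ)..((nn:ℝ)+1), ‖w.epsR x / x‖)
        = ∫ x in (1:ℝ)..((nn:ℝ)+1), w.epsR x / x := by
      apply intervalIntegral.integral_congr
      intro x hx
      rw [huIcc] at hx
      have hx0 : 0 < x := hsub hx
      exact Real.norm_of_nonneg (div_nonneg (w.heps_pos x hx0).le hx0.le)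
    rw [hnorm, hftc]
    have := hcon ((nn:ℝ)+1) hy
    linarith
  have hIoi : IntegrableOn (fun ρ : ℝ => w.epsR ρ / ρ) (Set.Ioi 1) volume := by
    apply MeasureTheory.integrableOn_Ioi_of_intervalIntegral_norm_bounded (R - w.ff 1) 1
      (b := fun nn : ℕ => (nn:ℝ)+1) (l := atTop)
    · intro nn
      have hy : (1:ℝ) ≤ (nn:ℝ)+1 := by linarith [Nat.cast_nonneg (α := ℝ) nn]
      have hsub2 : Set.Ioc (1:ℝ) ((nn:ℝ)+1) ⊆ Set.Icc 1 ((nn:ℝ)+1) := Set.Ioc_subset_Icc_self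
      have : IntegrableOn (fun ρ : ℝ => w.epsR ρ / ρ) (Set.Icc 1 ((nn:ℝ)+1)) volume := by
        apply ContinuousOn.integrableOn_Icc
        exact hcont.mono (fun x hx => lt_of_lt_of_le one_pos hx.1)
      exact this.mono_set hsub2
    · exact tendsto_atTop_add_const_right _ 1 tendsto_natCast_atTop_atTop
    · exact Filter.Eventually.of_forall key
  rw [integrableOn_Ici_iff_integrableOn_Ioi]
  exact hIoi

lemma bb_eq (n : ℕ) : w.bb n = ((n : ℝ) + 1) * w.ff ((n : ℝ) + 1) := by
  have h : ((n : ℝ) + 1) ≠ 0 := by positivity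
  simp [bb, ff, h]
  field_simp

lemma aa_eq_coeff (n : ℕ) : (w.γ ((n + 1 : ℕ) : ℂ)).re = w.aa n := by
  have h : (((n + 1 : ℕ) : ℂ)) = (((n : ℝ) + 1 : ℝ) : ℂ) := by push_cast; ring
  rw [h, w.gamma_re_eq (by have := w.hc; push_cast; linarith)]
  rfl

lemma aa_pos (n : ℕ) : 0 < w.aa n := Real.exp_pos _

/-- The key log-convexity-type estimate. -/
lemma bb_key {k m : ℕ} (hkm : k ≤ m) :
    w.bb (k + m) ≤ w.bb k + w.bb m + 2 * w.BB * k
      + 2 * w.BB * (Real.sqrt ((k:ℝ)+1) * Real.sqrt ((m:ℝ)+1)) - w.ff 1 := by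
  obtain ⟨K, hKdef⟩ : ∃ K : ℝ, K = (k:ℝ) + 1 := ⟨_, rfl⟩
  obtain ⟨M, hMdef⟩ : ∃ M : ℝ, M = (m:ℝ) + 1 := ⟨_, rfl⟩
  obtain ⟨N, hNdef⟩ : ∃ N : ℝ, N = ((k+m : ℕ):ℝ) + 1 := ⟨_, rfl⟩
  have hK0 : 0 < K := by rw [hKdef]; positivity
  have hM0 : 0 < M := by rw [hMdef]; positivity
  have hK1 : 1 ≤ K := by rw [hKdef]; linarith [Nat.cast_nonneg (α := ℝ) k]
  have hKM : K ≤ M := by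
    rw [hKdef, hMdef]
    have : (k:ℝ) ≤ (m:ℝ) := Nat.cast_le.mpr hkm
    linarith
  have hNid : N = K + M - 1 := by rw [hNdef, hKdef, hMdef]; push_cast; ring
  have hMN : M ≤ N := by rw [hNid]; linarith
  have hN2M : N ≤ 2 * M := by rw [hNid]; linarith
  have hN0 : 0 < N := by linarith
  have hBB0 : (0:ℝ) ≤ w.BB := (w.BB_pos).le
  -- bound 1 : f N - f M ≤ B (K-1)/M
  have hlogNM : Real.log N - Real.log M ≤ (K - 1) / M := by
    rw [← Real.log_div hN0.ne' hM0.ne']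
    have h1 := Real.log_le_sub_one_of_pos (div_pos hN0 hM0)
    have h2 : N / M - 1 = (K - 1) / M := by
      rw [hNid]; field_simp; ring
    linarith
  have hA1 : w.ff N - w.ff M ≤ w.BB * ((K - 1) / M) :=
    le_trans (w.ff_log_bound hM0 hMN) (mul_le_mul_of_nonneg_left hlogNM hBB0)
  have e1 : N * w.ff N ≤ N * w.ff M + 2 * w.BB * (K - 1) := by
    have hA2 : N * (w.ff N - w.ff M) ≤ N * (w.BB * ((K - 1) / M)) :=
      mul_le_mul_of_nonneg_left hA1 hN0.le
    have hA3 : N * (w.BB * ((K - 1) / M)) ≤ 2 * w.BB * (K - 1) := by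
      have heq : N * (w.BB * ((K - 1) / M)) = w.BB * (K - 1) * N / M := by ring
      rw [heq, div_le_iff₀ hM0]
      nlinarith [mul_nonneg hBB0 (by linarith : (0:ℝ) ≤ K - 1)]
    linarith [hA2, hA3, (by ring : N * (w.ff N - w.ff M) = N * w.ff N - N * w.ff M)]
  -- bound 2 : (K-1)(f M - f K) ≤ 2 B √K √M
  have hlogMK : Real.log M - Real.log K ≤ 2 * Real.sqrt M / Real.sqrt K := by
    rw [← Real.log_div hM0.ne' hK0.ne']
    have h1 : Real.log (M / K) = 2 * Real.log (Real.sqrt (M / K)) := by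
      rw [Real.log_sqrt (div_nonneg hM0.le hK0.le)]; ring
    have h2 : Real.log (Real.sqrt (M / K)) ≤ Real.sqrt (M / K) - 1 :=
      Real.log_le_sub_one_of_pos (Real.sqrt_pos.mpr (div_pos hM0 hK0))
    have h3 : Real.sqrt (M / K) = Real.sqrt M / Real.sqrt K := Real.sqrt_div hM0.le K
    have h4 : 2 * Real.sqrt M / Real.sqrt K = 2 * (Real.sqrt M / Real.sqrt K) := by ring
    rw [h4, ← h3]
    linarith
  have hffMK : 0 ≤ w.ff M - w.ff K :=
    sub_nonneg.mpr (w.ff_mono (Set.mem_Ioi.mpr hK0) (Set.mem_Ioi.mpr hM0) hKM)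
  have hB1 : w.ff M - w.ff K ≤ w.BB * (2 * Real.sqrt M / Real.sqrt K) :=
    le_trans (w.ff_log_bound hK0 hKM) (mul_le_mul_of_nonneg_left hlogMK hBB0)
  have hsqK : Real.sqrt K * Real.sqrt K = K := Real.mul_self_sqrt hK0.le
  have hsqK0 : 0 < Real.sqrt K := Real.sqrt_pos.mpr hK0
  have e2 : (K - 1) * (w.ff M - w.ff K) ≤ 2 * w.BB * (Real.sqrt K * Real.sqrt M) := by
    have h4 : (K - 1) * (w.ff M - w.ff K) ≤ K * (w.BB * (2 * Real.sqrt M / Real.sqrt K)) :=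
      mul_le_mul (by linarith) hB1 hffMK hK0.le
    have h5 : K * (w.BB * (2 * Real.sqrt M / Real.sqrt K)) =
        2 * w.BB * (Real.sqrt K * Real.sqrt M) := by
      have h5' : (Real.sqrt K * Real.sqrt K) * (w.BB * (2 * Real.sqrt M / Real.sqrt K)) =
          2 * w.BB * (Real.sqrt K * Real.sqrt M) := by
        rw [mul_div_assoc', mul_div_assoc', div_eq_iff hsqK0.ne']
        ring
      rw [hsqK] at h5'
      exact h5'
    linarith
  have e3 : w.ff 1 ≤ w.ff K :=
    w.ff_mono (Set.mem_Ioi.mpr one_pos) (Set.mem_Ioi.mpr hK0) hK1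
  have hid : N * w.ff M = K * w.ff K + M * w.ff M + (K - 1) * (w.ff M - w.ff K) - w.ff K := by
    rw [hNid]; ring
  have hbbn : w.bb (k+m) = N * w.ff N := by rw [hNdef]; exact w.bb_eq (k+m)
  have hbbk : w.bb k = K * w.ff K := by rw [hKdef]; exact w.bb_eq k
  have hbbm : w.bb m = M * w.ff M := by rw [hMdef]; exact w.bb_eq m
  have hKk : K - 1 = (k:ℝ) := by rw [hKdef]; ring
  rw [hbbn, hbbk, hbbm, ← hKdef, ← hMdef, ← hKk]
  linarith

lemma summable_coeff {t : ℝ} (ht : 0 < t) :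
    Summable (fun n : ℕ => t ^ n / w.aa n) := by
  obtain ⟨x0, hx01, hx0R⟩ := w.ff_unbounded (Real.log t + 1)
  set N : ℕ := ⌈x0⌉₊ with hNdef
  have hx00 : 0 < x0 := lt_of_lt_of_le one_pos hx01
  have hbound : ∀ n : ℕ, N ≤ n →
      t ^ n / w.aa n ≤ Real.exp (-Real.log t - 1) * (Real.exp (-1)) ^ n := by
    intro n hn
    have h1 : x0 ≤ (n:ℝ) + 1 := by
      have := Nat.le_ceil x0
      have h2 : (N:ℝ) ≤ (n:ℝ) := Nat.cast_le.mpr hn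
      linarith
    have hff : Real.log t + 1 ≤ w.ff ((n:ℝ)+1) := by
      have := w.ff_mono (Set.mem_Ioi.mpr hx00)
        (Set.mem_Ioi.mpr (by positivity : (0:ℝ) < (n:ℝ)+1)) h1
      linarith
    have hbb : ((n:ℝ)+1) * (Real.log t + 1) ≤ w.bb n := by
      rw [w.bb_eq n]
      exact mul_le_mul_of_nonneg_left hff (by positivity)
    have haa : Real.exp (((n:ℝ)+1) * (Real.log t + 1)) ≤ w.aa n := Real.exp_le_exp.mpr hbb
    have htn : t ^ n = Real.exp ((n:ℝ) * Real.log t) := by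
      rw [Real.exp_nat_mul, Real.exp_log ht]
    have key : t ^ n / w.aa n ≤
        Real.exp ((n:ℝ) * Real.log t) / Real.exp (((n:ℝ)+1) * (Real.log t + 1)) := by
      rw [htn]
      exact div_le_div_of_nonneg_left (Real.exp_pos _).le (Real.exp_pos _) haa
    have hcalc : Real.exp ((n:ℝ) * Real.log t) / Real.exp (((n:ℝ)+1) * (Real.log t + 1))
        = Real.exp (-Real.log t - 1) * (Real.exp (-1)) ^ n := by
      rw [← Real.exp_sub, ← Real.exp_nat_mul, ← Real.exp_add]
      congr 1
      ring
    linarith [key, hcalc.le, hcalc.ge]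
  rw [← summable_nat_add_iff N]
  have hs : Summable (fun n : ℕ =>
      (Real.exp (-Real.log t - 1) * Real.exp (-1) ^ N) * Real.exp (-1) ^ n) :=
    (summable_geometric_of_lt_one (Real.exp_pos _).le
      (Real.exp_lt_one_iff.mpr (by norm_num))).mul_left _
  have hs2 : Summable (fun n : ℕ =>
      Real.exp (-Real.log t - 1) * Real.exp (-1) ^ (n + N)) := by
    apply hs.congr
    intro n
    rw [pow_add]
    ring
  apply Summable.of_nonneg_of_le _ _ hs2
  · intro n
    exact (div_pos (pow_pos ht _) (w.aa_pos _)).le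
  · intro n
    exact hbound (n + N) (Nat.le_add_left N n)

lemma pair_bound_A {η θ δ : ℝ} (hη0 : 0 < η) (hθ0 : 0 < θ)
    (hηθ : η * Real.exp (2 * w.BB * Real.sqrt θ) ≤ 1)
    (hδ0 : 0 < δ) (hδe : δ * Real.exp (2 * w.BB) ≤ 1/2)
    {k m : ℕ} (hkm : k ≤ m) (hA : (k:ℝ) + 1 ≤ θ * ((m:ℝ) + 1)) :
    δ^k * η^m * w.aa (k+m) ≤
      ((Real.exp (-(w.ff 1)) * Real.exp (2 * w.BB * Real.sqrt θ)) * (1/2:ℝ)^k)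
        * (w.aa k * w.aa m) := by
  have hBB0 : (0:ℝ) ≤ w.BB := w.BB_pos.le
  have hsq : Real.sqrt ((k:ℝ)+1) * Real.sqrt ((m:ℝ)+1)
      ≤ Real.sqrt θ * ((m:ℝ)+1) := by
    have h1 : Real.sqrt ((k:ℝ)+1) ≤ Real.sqrt θ * Real.sqrt ((m:ℝ)+1) := by
      rw [← Real.sqrt_mul hθ0.le]
      exact Real.sqrt_le_sqrt hA
    have h2 : Real.sqrt ((m:ℝ)+1) * Real.sqrt ((m:ℝ)+1) = (m:ℝ)+1 :=
      Real.mul_self_sqrt (by positivity)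
    calc Real.sqrt ((k:ℝ)+1) * Real.sqrt ((m:ℝ)+1)
        ≤ (Real.sqrt θ * Real.sqrt ((m:ℝ)+1)) * Real.sqrt ((m:ℝ)+1) :=
          mul_le_mul_of_nonneg_right h1 (Real.sqrt_nonneg _)
      _ = Real.sqrt θ * ((m:ℝ)+1) := by rw [mul_assoc, h2]
  have hbb2 : w.bb (k+m) ≤ w.bb k + w.bb m + 2*w.BB*(k:ℝ)
      + 2*w.BB*(Real.sqrt θ * ((m:ℝ)+1)) - w.ff 1 := by
    have h3 := mul_le_mul_of_nonneg_left hsq (by positivity : (0:ℝ) ≤ 2*w.BB)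
    have h4 := w.bb_key hkm
    linarith
  have hexp : w.aa (k+m) ≤ (w.aa k * w.aa m) * (Real.exp (2*w.BB))^k
      * (Real.exp (2*w.BB*Real.sqrt θ))^m
      * (Real.exp (-(w.ff 1)) * Real.exp (2*w.BB*Real.sqrt θ)) := by
    calc w.aa (k+m) = Real.exp (w.bb (k+m)) := rfl
      _ ≤ Real.exp (w.bb k + w.bb m + 2*w.BB*(k:ℝ)
            + 2*w.BB*(Real.sqrt θ * ((m:ℝ)+1)) - w.ff 1) := Real.exp_le_exp.mpr hbb2
      _ = (w.aa k * w.aa m) * (Real.exp (2*w.BB))^k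
            * (Real.exp (2*w.BB*Real.sqrt θ))^m
            * (Real.exp (-(w.ff 1)) * Real.exp (2*w.BB*Real.sqrt θ)) := by
          show _ = Real.exp (w.bb k) * Real.exp (w.bb m) * _ * _ * _
          rw [← Real.exp_nat_mul, ← Real.exp_nat_mul, ← Real.exp_add, ← Real.exp_add,
            ← Real.exp_add, ← Real.exp_add, ← Real.exp_add]
          congr 1
          ring
  calc δ^k * η^m * w.aa (k+m)
      ≤ δ^k * η^m * ((w.aa k * w.aa m) * (Real.exp (2*w.BB))^k
          * (Real.exp (2*w.BB*Real.sqrt θ))^m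
          * (Real.exp (-(w.ff 1)) * Real.exp (2*w.BB*Real.sqrt θ))) := by
        apply mul_le_mul_of_nonneg_left hexp (by positivity)
    _ = ((δ * Real.exp (2*w.BB))^k * (η * Real.exp (2*w.BB*Real.sqrt θ))^m)
          * (Real.exp (-(w.ff 1)) * Real.exp (2*w.BB*Real.sqrt θ))
          * (w.aa k * w.aa m) := by
        rw [mul_pow, mul_pow]; ring
    _ ≤ (((1:ℝ)/2)^k * (1:ℝ)^m)
          * (Real.exp (-(w.ff 1)) * Real.exp (2*w.BB*Real.sqrt θ))
          * (w.aa k * w.aa m) := by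
        have hp1 : (δ * Real.exp (2*w.BB))^k ≤ ((1:ℝ)/2)^k :=
          pow_le_pow_left₀ (by positivity) hδe k
        have hp2 : (η * Real.exp (2*w.BB*Real.sqrt θ))^m ≤ (1:ℝ)^m :=
          pow_le_pow_left₀ (by positivity) hηθ m
        have h3 := mul_le_mul hp1 hp2 (by positivity) (by positivity)
        have h4 : (0:ℝ) ≤ Real.exp (-(w.ff 1)) * Real.exp (2*w.BB*Real.sqrt θ) := by positivity
        have h5 : (0:ℝ) ≤ w.aa k * w.aa m := mul_nonneg (w.aa_pos k).le (w.aa_pos m).le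
        exact mul_le_mul_of_nonneg_right (mul_le_mul_of_nonneg_right h3 h4) h5
    _ = ((Real.exp (-(w.ff 1)) * Real.exp (2 * w.BB * Real.sqrt θ)) * (1/2:ℝ)^k)
          * (w.aa k * w.aa m) := by rw [one_pow]; ring

lemma bb_crude (k m : ℕ) :
    w.bb (k+m) ≤ w.bb k + w.bb m + 4*w.BB*(((k+m:ℕ):ℝ)+1) - w.ff 1 := by
  have hBB0 : (0:ℝ) ≤ w.BB := w.BB_pos.le
  have main : ∀ p q : ℕ, p ≤ q →
      w.bb (p+q) ≤ w.bb p + w.bb q + 4*w.BB*(((p+q:ℕ):ℝ)+1) - w.ff 1 := by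
    intro p q hpq
    have h := w.bb_key hpq
    have hN : (0:ℝ) ≤ ((p+q:ℕ):ℝ) + 1 := by positivity
    have hp : (p:ℝ) ≤ ((p+q:ℕ):ℝ) + 1 := by push_cast; linarith [Nat.cast_nonneg (α := ℝ) q]
    have hsq : Real.sqrt ((p:ℝ)+1) * Real.sqrt ((q:ℝ)+1) ≤ ((p+q:ℕ):ℝ) + 1 := by
      have h1 : Real.sqrt ((p:ℝ)+1) ≤ Real.sqrt (((p+q:ℕ):ℝ)+1) :=
        Real.sqrt_le_sqrt (by push_cast; linarith [Nat.cast_nonneg (α := ℝ) q])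
      have h2 : Real.sqrt ((q:ℝ)+1) ≤ Real.sqrt (((p+q:ℕ):ℝ)+1) :=
        Real.sqrt_le_sqrt (by push_cast; linarith [Nat.cast_nonneg (α := ℝ) p])
      have h3 : Real.sqrt (((p+q:ℕ):ℝ)+1) * Real.sqrt (((p+q:ℕ):ℝ)+1) = ((p+q:ℕ):ℝ)+1 :=
        Real.mul_self_sqrt hN
      calc Real.sqrt ((p:ℝ)+1) * Real.sqrt ((q:ℝ)+1)
          ≤ Real.sqrt (((p+q:ℕ):ℝ)+1) * Real.sqrt (((p+q:ℕ):ℝ)+1) :=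
            mul_le_mul h1 h2 (Real.sqrt_nonneg _) (Real.sqrt_nonneg _)
        _ = ((p+q:ℕ):ℝ)+1 := h3
    have h5 := mul_le_mul_of_nonneg_left hsq (by positivity : (0:ℝ) ≤ 2*w.BB)
    have h6 := mul_le_mul_of_nonneg_left hp (by positivity : (0:ℝ) ≤ 2*w.BB)
    nlinarith [h, h5, h6]
  rcases le_total k m with h | h
  · exact main k m h
  · have := main m k h
    rw [Nat.add_comm m k] at this
    have hcomm : w.bb m + w.bb k = w.bb k + w.bb m := by ring
    linarith [this]

lemma pair_bound_B {η θ δ : ℝ} (hη0 : 0 < η) (hη1 : η < 1) (hθ0 : 0 < θ)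
    (hδ0 : 0 < δ) (hδ1 : δ ≤ 1)
    (hδθ : δ ^ (θ/2 : ℝ) ≤ Real.exp (-(4*w.BB))/2)
    {k m : ℕ} (hB : (θ/2) * (((k+m:ℕ):ℝ)+1) ≤ (k:ℝ) + 1) :
    δ^k * η^m * w.aa (k+m) ≤
      ((Real.exp (-(w.ff 1)) / δ) * (1/2:ℝ)^(k+m+1)) * (w.aa k * w.aa m) := by
  have hBB0 : (0:ℝ) ≤ w.BB := w.BB_pos.le
  obtain ⟨N, hNdef⟩ : ∃ N : ℝ, N = ((k+m:ℕ):ℝ) + 1 := ⟨_, rfl⟩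
  have hN0 : (0:ℝ) ≤ N := by rw [hNdef]; positivity
  -- δ^k ≤ (1/2)^(n+1) * exp(-(4B N)) / δ
  have hdk : δ^k ≤ (1/2:ℝ)^(k+m+1) * Real.exp (-(4*w.BB*N)) / δ := by
    have h1 : δ^k = δ ^ ((k:ℝ) : ℝ) := (Real.rpow_natCast δ k).symm
    have h2 : δ ^ ((k:ℝ)+1 : ℝ) ≤ δ ^ ((θ/2) * N : ℝ) := by
      apply Real.rpow_le_rpow_of_exponent_ge hδ0 hδ1
      rw [hNdef]; exact hB
    have h3 : δ ^ ((θ/2) * N : ℝ) = (δ ^ (θ/2 : ℝ)) ^ (N : ℝ) := by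
      rw [← Real.rpow_mul hδ0.le]
    have h4 : (δ ^ (θ/2 : ℝ)) ^ (N : ℝ) ≤ (Real.exp (-(4*w.BB))/2) ^ (N : ℝ) :=
      Real.rpow_le_rpow (Real.rpow_nonneg hδ0.le _) hδθ hN0
    have h5 : (Real.exp (-(4*w.BB))/2) ^ (N : ℝ)
        = Real.exp (-(4*w.BB*N)) * (1/2:ℝ)^(k+m+1) := by
      rw [div_eq_mul_one_div, Real.mul_rpow (Real.exp_pos _).le (by norm_num)]
      congr 1
      · rw [← Real.exp_mul]
        congr 1
        ring
      · rw [hNdef]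
        rw [show ((k+m:ℕ):ℝ) + 1 = ((k+m+1 : ℕ):ℝ) by push_cast; ring]
        exact Real.rpow_natCast _ _
    have h6 : δ ^ ((k:ℝ)+1 : ℝ) = δ^k * δ := by
      rw [Real.rpow_add hδ0, Real.rpow_natCast, Real.rpow_one]
    rw [le_div_iff₀ hδ0]
    calc δ^k * δ = δ ^ ((k:ℝ)+1 : ℝ) := h6.symm
      _ ≤ (Real.exp (-(4*w.BB))/2) ^ (N : ℝ) := le_trans h2 (h3 ▸ h4)
      _ = Real.exp (-(4*w.BB*N)) * (1/2:ℝ)^(k+m+1) := h5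
      _ = (1/2:ℝ)^(k+m+1) * Real.exp (-(4*w.BB*N)) := by ring
  have hexp : w.aa (k+m) ≤ (w.aa k * w.aa m) * Real.exp (4*w.BB*N)
      * Real.exp (-(w.ff 1)) := by
    have h := w.bb_crude k m
    calc w.aa (k+m) = Real.exp (w.bb (k+m)) := rfl
      _ ≤ Real.exp (w.bb k + w.bb m + 4*w.BB*N - w.ff 1) := by
          apply Real.exp_le_exp.mpr; rw [hNdef]; exact h
      _ = (w.aa k * w.aa m) * Real.exp (4*w.BB*N) * Real.exp (-(w.ff 1)) := by
          show _ = Real.exp (w.bb k) * Real.exp (w.bb m) * _ * _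
          rw [← Real.exp_add, ← Real.exp_add, ← Real.exp_add]
          congr 1
  have hηm : η^m ≤ 1 := pow_le_one₀ hη0.le hη1.le
  calc δ^k * η^m * w.aa (k+m)
      ≤ δ^k * η^m * ((w.aa k * w.aa m) * Real.exp (4*w.BB*N) * Real.exp (-(w.ff 1))) :=
        mul_le_mul_of_nonneg_left hexp (by positivity)
    _ ≤ ((1/2:ℝ)^(k+m+1) * Real.exp (-(4*w.BB*N)) / δ) * 1
          * ((w.aa k * w.aa m) * Real.exp (4*w.BB*N) * Real.exp (-(w.ff 1))) := by
        have h5 : (0:ℝ) ≤ (w.aa k * w.aa m) * Real.exp (4*w.BB*N) * Real.exp (-(w.ff 1)) := by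
          have := mul_nonneg (w.aa_pos k).le (w.aa_pos m).le
          positivity
        apply mul_le_mul_of_nonneg_right _ h5
        exact mul_le_mul hdk hηm (by positivity) (by positivity)
    _ = ((Real.exp (-(w.ff 1)) / δ) * (1/2:ℝ)^(k+m+1)) * (w.aa k * w.aa m)
          * (Real.exp (-(4*w.BB*N)) * Real.exp (4*w.BB*N)) := by ring
    _ = ((Real.exp (-(w.ff 1)) / δ) * (1/2:ℝ)^(k+m+1)) * (w.aa k * w.aa m) := by
        rw [← Real.exp_add, neg_add_cancel, Real.exp_zero, mul_one]

lemma pair_dichotomy {θ : ℝ} (hθ0 : 0 < θ) (hθ1 : θ ≤ 1) (k m : ℕ) :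
    (k ≤ m ∧ (k:ℝ)+1 ≤ θ*((m:ℝ)+1)) ∨ (θ/2) * (((k+m:ℕ):ℝ)+1) ≤ (k:ℝ)+1 := by
  by_cases h1 : k ≤ m
  · by_cases h2 : (k:ℝ)+1 ≤ θ*((m:ℝ)+1)
    · exact Or.inl ⟨h1, h2⟩
    · right
      push_neg at h2
      have hc : (k:ℝ) ≤ (m:ℝ) := Nat.cast_le.mpr h1
      have hm : ((k+m:ℕ):ℝ)+1 ≤ 2*((m:ℝ)+1) := by push_cast; linarith
      nlinarith [hθ0.le]
  · right
    push_neg at h1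
    have hc : (m:ℝ) ≤ (k:ℝ) := Nat.cast_le.mpr h1.le
    have hm : ((k+m:ℕ):ℝ)+1 ≤ 2*((k:ℝ)+1) := by push_cast; linarith
    have hk0 : (0:ℝ) ≤ (k:ℝ)+1 := by positivity
    nlinarith [hθ0.le]

lemma pair_bound {η θ δ : ℝ} (hη0 : 0 < η) (hη1 : η < 1) (hθ0 : 0 < θ) (hθ1 : θ ≤ 1)
    (hηθ : η * Real.exp (2 * w.BB * Real.sqrt θ) ≤ 1)
    (hδ0 : 0 < δ) (hδ1 : δ ≤ 1) (hδe : δ * Real.exp (2 * w.BB) ≤ 1/2)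
    (hδθ : δ ^ (θ/2 : ℝ) ≤ Real.exp (-(4*w.BB))/2) (k m : ℕ) :
    δ^k * η^m * w.aa (k+m) ≤
      ((Real.exp (-(w.ff 1)) * Real.exp (2 * w.BB * Real.sqrt θ)) * (1/2:ℝ)^k
        + (Real.exp (-(w.ff 1)) / δ) * (1/2:ℝ)^(k+m+1)) * (w.aa k * w.aa m) := by
  have hP : (0:ℝ) ≤ w.aa k * w.aa m := mul_nonneg (w.aa_pos k).le (w.aa_pos m).le
  rcases pair_dichotomy hθ0 hθ1 k m with ⟨h1, h2⟩ | h
  · calc δ^k * η^m * w.aa (k+m)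
        ≤ ((Real.exp (-(w.ff 1)) * Real.exp (2 * w.BB * Real.sqrt θ)) * (1/2:ℝ)^k)
            * (w.aa k * w.aa m) := w.pair_bound_A hη0 hθ0 hηθ hδ0 hδe h1 h2
      _ ≤ _ := by
          apply mul_le_mul_of_nonneg_right _ hP
          have : (0:ℝ) ≤ (Real.exp (-(w.ff 1)) / δ) * (1/2:ℝ)^(k+m+1) := by positivity
          linarith
  · calc δ^k * η^m * w.aa (k+m)
        ≤ ((Real.exp (-(w.ff 1)) / δ) * (1/2:ℝ)^(k+m+1)) * (w.aa k * w.aa m) :=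
          w.pair_bound_B hη0 hη1 hθ0 hδ0 hδ1 hδθ h
      _ ≤ _ := by
          apply mul_le_mul_of_nonneg_right _ hP
          have : (0:ℝ) ≤ (Real.exp (-(w.ff 1)) * Real.exp (2 * w.BB * Real.sqrt θ))
              * (1/2:ℝ)^k := by positivity
          linarith

end AdmissibleWeight

/-- For an admissible weight `γ` and any `η ∈ (0,1)` there exist
`δ > 0` and `C > 0` with `E(δt)·E(ηt) ≤ C·E(t)` for all `t > 0`. -/
theorem stmt_17 (w : AdmissibleWeight) :
    ∀ η : ℝ, 0 < η → η < 1 → ∃ δ : ℝ, 0 < δ ∧ ∃ C : ℝ, 0 < C ∧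
      ∀ t : ℝ, 0 < t → w.E (δ * t) * w.E (η * t) ≤ C * w.E t := by
  intro η hη0 hη1
  have hBB := w.BB_pos
  have hlogη : 0 < -Real.log η := by linarith [Real.log_neg hη0 hη1]
  -- choice of θ
  obtain ⟨θ, hθdef⟩ : ∃ θ : ℝ, θ = min 1 ((-Real.log η / (4*w.BB))^2) := ⟨_, rfl⟩
  have hθ0 : 0 < θ := by
    rw [hθdef]
    exact lt_min one_pos (pow_pos (div_pos hlogη (by positivity)) 2)
  have hθ1 : θ ≤ 1 := hθdef ▸ min_le_left _ _
  have hsqθ : Real.sqrt θ ≤ -Real.log η / (4*w.BB) := by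
    have h1 : θ ≤ (-Real.log η / (4*w.BB))^2 := hθdef ▸ min_le_right _ _
    calc Real.sqrt θ ≤ Real.sqrt ((-Real.log η / (4*w.BB))^2) := Real.sqrt_le_sqrt h1
      _ = -Real.log η / (4*w.BB) := Real.sqrt_sq (by positivity)
  have hηθ : η * Real.exp (2*w.BB*Real.sqrt θ) ≤ 1 := by
    have h2 : 2*w.BB*Real.sqrt θ ≤ -Real.log η := by
      have h3 := mul_le_mul_of_nonneg_left hsqθ (by positivity : (0:ℝ) ≤ 2*w.BB)
      have h4 : 2*w.BB*(-Real.log η / (4*w.BB)) = -Real.log η / 2 := by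
        field_simp
        ring
      rw [h4] at h3
      linarith
    have h5 : Real.exp (2*w.BB*Real.sqrt θ) ≤ η⁻¹ := by
      calc Real.exp (2*w.BB*Real.sqrt θ) ≤ Real.exp (-Real.log η) := Real.exp_le_exp.mpr h2
        _ = η⁻¹ := by rw [Real.exp_neg, Real.exp_log hη0]
    calc η * Real.exp (2*w.BB*Real.sqrt θ) ≤ η * η⁻¹ :=
          mul_le_mul_of_nonneg_left h5 hη0.le
      _ = 1 := mul_inv_cancel₀ hη0.ne'
  -- choice of δ
  obtain ⟨δ, hδdef⟩ : ∃ δ : ℝ,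
      δ = min ((Real.exp (-(4*w.BB))/2) ^ (2/θ : ℝ)) (Real.exp (-(2*w.BB))/2) := ⟨_, rfl⟩
  have hδ0 : 0 < δ := by
    rw [hδdef]
    exact lt_min (Real.rpow_pos_of_pos (by positivity) _) (by positivity)
  have hδ2 : δ ≤ Real.exp (-(2*w.BB))/2 := hδdef ▸ min_le_right _ _
  have hδ1 : δ ≤ 1 := by
    have : Real.exp (-(2*w.BB)) ≤ 1 := Real.exp_le_one_iff.mpr (by linarith)
    linarith
  have hδe : δ * Real.exp (2*w.BB) ≤ 1/2 := by
    have h1 : δ * Real.exp (2*w.BB) ≤ (Real.exp (-(2*w.BB))/2) * Real.exp (2*w.BB) :=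
      mul_le_mul_of_nonneg_right hδ2 (Real.exp_pos _).le
    have h2 : (Real.exp (-(2*w.BB))/2) * Real.exp (2*w.BB) = 1/2 := by
      rw [div_mul_eq_mul_div, ← Real.exp_add, neg_add_cancel, Real.exp_zero]
    linarith
  have hδθ : δ ^ (θ/2 : ℝ) ≤ Real.exp (-(4*w.BB))/2 := by
    have h1 : δ ≤ (Real.exp (-(4*w.BB))/2) ^ (2/θ : ℝ) := hδdef ▸ min_le_left _ _
    calc δ ^ (θ/2 : ℝ) ≤ ((Real.exp (-(4*w.BB))/2) ^ (2/θ : ℝ)) ^ (θ/2 : ℝ) :=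
          Real.rpow_le_rpow hδ0.le h1 (by positivity)
      _ = (Real.exp (-(4*w.BB))/2) ^ ((2/θ) * (θ/2) : ℝ) := by
          rw [← Real.rpow_mul (by positivity)]
      _ = Real.exp (-(4*w.BB))/2 := by
          rw [show (2/θ) * (θ/2) = (1:ℝ) by field_simp, Real.rpow_one]
  -- the constants
  obtain ⟨CA, hCAdef⟩ : ∃ CA : ℝ,
      CA = Real.exp (-(w.ff 1)) * Real.exp (2*w.BB*Real.sqrt θ) := ⟨_, rfl⟩
  obtain ⟨CB, hCBdef⟩ : ∃ CB : ℝ, CB = Real.exp (-(w.ff 1)) / δ := ⟨_, rfl⟩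
  have hCA0 : 0 < CA := by rw [hCAdef]; positivity
  have hCB0 : 0 < CB := by rw [hCBdef]; positivity
  refine ⟨δ, hδ0, 2*CA + CB, by linarith, ?_⟩
  intro t ht
  have hpair : ∀ k m : ℕ, δ^k * η^m * w.aa (k+m) ≤
      (CA * (1/2:ℝ)^k + CB * (1/2:ℝ)^(k+m+1)) * (w.aa k * w.aa m) := by
    intro k m
    rw [hCAdef, hCBdef]
    exact w.pair_bound hη0 hη1 hθ0 hθ1 hηθ hδ0 hδ1 hδe hδθ k m
  -- series setup
  have hδt : 0 < δ * t := mul_pos hδ0 ht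
  have hηt : 0 < η * t := mul_pos hη0 ht
  have hsum1 : Summable (fun k : ℕ => (δ*t)^k / w.aa k) := w.summable_coeff hδt
  have hsum2 : Summable (fun m : ℕ => (η*t)^m / w.aa m) := w.summable_coeff hηt
  have hsumt : Summable (fun n : ℕ => t^n / w.aa n) := w.summable_coeff ht
  have hnorm1 : Summable (fun k : ℕ => ‖(δ*t)^k / w.aa k‖) :=
    hsum1.congr (fun k => (Real.norm_of_nonneg
      (div_nonneg (pow_nonneg hδt.le k) (w.aa_pos k).le)).symm)
  have hnorm2 : Summable (fun m : ℕ => ‖(η*t)^m / w.aa m‖) :=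
    hsum2.congr (fun m => (Real.norm_of_nonneg
      (div_nonneg (pow_nonneg hηt.le m) (w.aa_pos m).le)).symm)
  have hE1 : w.E (δ*t) = ∑' k : ℕ, (δ*t)^k / w.aa k :=
    tsum_congr (fun n => by rw [w.aa_eq_coeff])
  have hE2 : w.E (η*t) = ∑' m : ℕ, (η*t)^m / w.aa m :=
    tsum_congr (fun n => by rw [w.aa_eq_coeff])
  have hEt : w.E t = ∑' n : ℕ, t^n / w.aa n :=
    tsum_congr (fun n => by rw [w.aa_eq_coeff])
  have hprod : w.E (δ*t) * w.E (η*t) = ∑' n : ℕ,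
      ∑ kl ∈ Finset.HasAntidiagonal.antidiagonal n, ((δ*t)^kl.1 / w.aa kl.1) * ((η*t)^kl.2 / w.aa kl.2) := by
    rw [hE1, hE2]
    exact tsum_mul_tsum_eq_tsum_sum_antidiagonal_of_summable_norm hnorm1 hnorm2
  -- the termwise bound
  have hterm : ∀ n : ℕ,
      (∑ kl ∈ Finset.HasAntidiagonal.antidiagonal n, ((δ*t)^kl.1 / w.aa kl.1) * ((η*t)^kl.2 / w.aa kl.2))
        ≤ (2*CA + CB) * (t^n / w.aa n) := by
    intro n
    have hS : ∑ kl ∈ Finset.HasAntidiagonal.antidiagonal n, (1/2:ℝ)^kl.1 ≤ 2 := by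
      rw [Finset.Nat.sum_antidiagonal_eq_sum_range_succ_mk]
      have hgs : Summable (fun k : ℕ => (1/2:ℝ)^k) :=
        summable_geometric_of_lt_one (by norm_num) (by norm_num)
      have h1 := Summable.sum_le_tsum (Finset.range (n+1)) (fun i _ => by positivity) hgs
      rw [tsum_geometric_of_lt_one (by norm_num) (by norm_num)] at h1
      norm_num at h1 ⊢
      convert h1 using 2
    have hn1 : ((n:ℝ)+1) * (1/2:ℝ)^(n+1) ≤ 1 := by
      have h2 : ((n:ℝ)+1) ≤ (2:ℝ)^(n+1) := by
        have h := (Nat.lt_two_pow_self (n := n+1)).le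
        exact_mod_cast h
      calc ((n:ℝ)+1) * (1/2:ℝ)^(n+1) ≤ (2:ℝ)^(n+1) * (1/2:ℝ)^(n+1) :=
            mul_le_mul_of_nonneg_right h2 (by positivity)
        _ = 1 := by rw [← mul_pow]; norm_num
    calc (∑ kl ∈ Finset.HasAntidiagonal.antidiagonal n, ((δ*t)^kl.1 / w.aa kl.1) * ((η*t)^kl.2 / w.aa kl.2))
        ≤ ∑ kl ∈ Finset.HasAntidiagonal.antidiagonal n,
            (CA * (1/2:ℝ)^kl.1 + CB * (1/2:ℝ)^(n+1)) * (t^n / w.aa n) := by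
          apply Finset.sum_le_sum
          intro kl hkl
          have hklm : kl.1 + kl.2 = n := Finset.HasAntidiagonal.mem_antidiagonal.mp hkl
          have haak := w.aa_pos kl.1
          have haam := w.aa_pos kl.2
          have haan := w.aa_pos n
          have heq : ((δ*t)^kl.1 / w.aa kl.1) * ((η*t)^kl.2 / w.aa kl.2)
              = (δ^kl.1 * η^kl.2 * t^n) / (w.aa kl.1 * w.aa kl.2) := by
            rw [div_mul_div_comm]
            congr 1
            rw [mul_pow, mul_pow, ← hklm, pow_add]
            ring
          rw [heq]
          rw [div_le_iff₀ (mul_pos haak haam)]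
          have hp := hpair kl.1 kl.2
          rw [hklm] at hp
          have h3 := mul_le_mul_of_nonneg_right hp (pow_nonneg ht.le n)
          calc δ^kl.1 * η^kl.2 * t^n
              = (δ^kl.1 * η^kl.2 * w.aa n) * (t^n / w.aa n) := by
                field_simp
            _ ≤ ((CA * (1/2:ℝ)^kl.1 + CB * (1/2:ℝ)^(kl.1+kl.2+1)) * (w.aa kl.1 * w.aa kl.2))
                  * (t^n / w.aa n) := by
                apply mul_le_mul_of_nonneg_right _ (div_nonneg (pow_nonneg ht.le n) haan.le)
                rw [hklm]
                exact hp
            _ = (CA * (1/2:ℝ)^kl.1 + CB * (1/2:ℝ)^(n+1)) * (t^n / w.aa n)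
                  * (w.aa kl.1 * w.aa kl.2) := by
                rw [hklm]
                ring
      _ ≤ (2*CA + CB) * (t^n / w.aa n) := by
          rw [← Finset.sum_mul]
          apply mul_le_mul_of_nonneg_right _ (div_nonneg (pow_nonneg ht.le n) (w.aa_pos n).le)
          rw [Finset.sum_add_distrib]
          have e1 : ∑ kl ∈ Finset.HasAntidiagonal.antidiagonal n, CA * (1/2:ℝ)^kl.1
              = CA * ∑ kl ∈ Finset.HasAntidiagonal.antidiagonal n, (1/2:ℝ)^kl.1 := by
            rw [Finset.mul_sum]
          have e2 : ∑ kl ∈ Finset.HasAntidiagonal.antidiagonal n, CB * (1/2:ℝ)^(n+1)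
              = ((n:ℝ)+1) * (CB * (1/2:ℝ)^(n+1)) := by
            rw [Finset.sum_const, Finset.Nat.card_antidiagonal, nsmul_eq_mul]
            push_cast
            ring
          rw [e1, e2]
          have h4 : CA * (∑ kl ∈ Finset.HasAntidiagonal.antidiagonal n, (1/2:ℝ)^kl.1) ≤ CA * 2 :=
            mul_le_mul_of_nonneg_left hS hCA0.le
          have h5 : ((n:ℝ)+1) * (CB * (1/2:ℝ)^(n+1)) ≤ CB := by
            have h6 := mul_le_mul_of_nonneg_right hn1 hCB0.le
            calc ((n:ℝ)+1) * (CB * (1/2:ℝ)^(n+1))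
                = (((n:ℝ)+1) * (1/2:ℝ)^(n+1)) * CB := by ring
              _ ≤ 1 * CB := h6
              _ = CB := one_mul CB
          linarith
  -- conclusion
  have hLsum : Summable (fun n : ℕ => ∑ kl ∈ Finset.HasAntidiagonal.antidiagonal n,
      ((δ*t)^kl.1 / w.aa kl.1) * ((η*t)^kl.2 / w.aa kl.2)) :=
    (summable_norm_sum_mul_antidiagonal_of_summable_norm hnorm1 hnorm2).of_norm
  have hRsum : Summable (fun n : ℕ => (2*CA + CB) * (t^n / w.aa n)) := hsumt.mul_left _
  calc w.E (δ*t) * w.E (η*t)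
      = ∑' n : ℕ, ∑ kl ∈ Finset.HasAntidiagonal.antidiagonal n,
          ((δ*t)^kl.1 / w.aa kl.1) * ((η*t)^kl.2 / w.aa kl.2) := hprod
    _ ≤ ∑' n : ℕ, (2*CA + CB) * (t^n / w.aa n) := Summable.tsum_le_tsum hterm hLsum hRsum
    _ = (2*CA + CB) * ∑' n : ℕ, t^n / w.aa n := tsum_mul_left
    _ = (2*CA + CB) * w.E t := by rw [hEt]
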